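/- Let A and B be Banach algebras with A commutative, σ ∈ Hom(A) with dense range, τ ∈ Hom(B), and let φ : A → B be a continuous surjective algebra homomorphism with τ ∘ φ = φ ∘ σ. If A is σ-weakly amenable, then B is τ-weakly amenable. -/
import Mathlib


/-- `σ`-weak amenability of a Banach algebra `B`: every bounded `σ`-derivation
`D : B → B*` into the dual bimodule `B*` (with actions `(b·Λ)(x) = Λ(x b)`,
`(Λ·b)(x) = Λ(b x)`) is `σ`-inner. -/
def SigmaWeaklyAmenable (B : Type u) [NonUnitalNormedRing B] [NormedSpace ℂ B]
    (s : B → B) : Prop :=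
  ∀ D : B →L[ℂ] (B →L[ℂ] ℂ),
    (∀ a b x, D (a * b) x = D a (s b * x) + D b (x * s a)) →
    ∃ Λ : B →L[ℂ] ℂ, ∀ a x, D a x = Λ (x * s a) - Λ (s a * x)

/-- if `A` is commutative, `σ ∈ Hom(A)` has dense range,
`φ : A → B` is a continuous surjective homomorphism with `τ ∘ φ = φ ∘ σ`, and
`A` is `σ`-weakly amenable, then `B` is `τ`-weakly amenable. -/
theorem stmt11 {A B : Type u} [NonUnitalNormedRing A] [NormedSpace ℂ A]
    [IsScalarTower ℂ A A] [SMulCommClass ℂ A A] [CompleteSpace A]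
    [NonUnitalNormedRing B] [NormedSpace ℂ B]
    [IsScalarTower ℂ B B] [SMulCommClass ℂ B B] [CompleteSpace B]
    (hcomm : ∀ a b : A, a * b = b * a)
    (σ : A →L[ℂ] A) (hσ : ∀ a b : A, σ (a * b) = σ a * σ b)
    (hdense : DenseRange σ)
    (τ : B →L[ℂ] B) (hτ : ∀ a b : B, τ (a * b) = τ a * τ b)
    (φ : A →L[ℂ] B) (hφ : ∀ a b : A, φ (a * b) = φ a * φ b)
    (hsurj : Function.Surjective φ) (hint : ∀ a : A, τ (φ a) = φ (σ a))
    (hwa : SigmaWeaklyAmenable A σ) : SigmaWeaklyAmenable B τ := by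
  intro D hD
  -- pull back D to A
  set D' : A →L[ℂ] (A →L[ℂ] ℂ) :=
    (((ContinuousLinearMap.compL ℂ A B ℂ).flip φ).comp (D.comp φ)) with hD'
  have hD'app : ∀ a x : A, D' a x = D (φ a) (φ x) := fun a x => rfl
  have hder : ∀ a b x : A, D' (a * b) x = D' a (σ b * x) + D' b (x * σ a) := by
    intro a b x
    rw [hD'app, hD'app, hD'app, hφ, hD (φ a) (φ b) (φ x), hφ, hφ, hint, hint]
  obtain ⟨Λ, hΛ⟩ := hwa D' hder
  have hzero : ∀ a x : A, D (φ a) (φ x) = 0 := by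
    intro a x
    rw [← hD'app, hΛ, hcomm x (σ a), sub_self]
  refine ⟨0, fun b x => ?_⟩
  obtain ⟨a, rfl⟩ := hsurj b
  obtain ⟨y, rfl⟩ := hsurj x
  simp [hzero]
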